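/- Wasserstein stability of the Christoffel polynomial: let X, Y ⊆ [−1,1]ⁿ be finite nondegenerate sample sets with empirical measures μ_X, μ_Y, and let Λ_X, Λ_Y be their degree-d Christoffel polynomials. With C = 4·binom(n+d,d)·d², we have for all x ∈ ℝⁿ: |Λ_X(x) − Λ_Y(x)| ≤ C · ‖Λ_X‖_∞ · d_W(μ_X, μ_Y) · Λ_Y(x), where ‖Λ_X‖_∞ = max_{x∈[−1,1]ⁿ} Λ_X(x) and d_W is the Wasserstein distance. -/

import Mathlib

open MvPolynomial Finset

/-- The box [−1,1]ⁿ. -/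
def Box (n : ℕ) : Set (Fin n → ℝ) := {x | ∀ i, |x i| ≤ 1}

/-- Supremum norm of a function over the box [−1,1]ⁿ. -/
noncomputable def supNormBox {n : ℕ} (f : (Fin n → ℝ) → ℝ) : ℝ := sSup (f '' Box n)

/-- Euclidean (ℓ²) distance on ℝⁿ. -/
noncomputable def dist2 {n : ℕ} (x y : Fin n → ℝ) : ℝ := Real.sqrt (∑ i, (x i - y i) ^ 2)

/-- A coupling between two finitely supported measures on ℝⁿ. -/
def IsCoupling {n : ℕ} (X Y : Finset (Fin n → ℝ)) (μX μY : (Fin n → ℝ) → ℝ)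
    (γ : (Fin n → ℝ) → (Fin n → ℝ) → ℝ) : Prop :=
  (∀ x y, 0 ≤ γ x y) ∧ (∀ x ∈ X, ∑ y ∈ Y, γ x y = μX x) ∧ (∀ y ∈ Y, ∑ x ∈ X, γ x y = μY y)

/-- The 1-Wasserstein distance (in Euclidean distance) of two finitely supported measures. -/
noncomputable def wassersteinDist {n : ℕ} (X Y : Finset (Fin n → ℝ))
    (μX μY : (Fin n → ℝ) → ℝ) : ℝ :=
  sInf {r : ℝ | ∃ γ, IsCoupling X Y μX μY γ ∧ r = ∑ x ∈ X, ∑ y ∈ Y, γ x y * dist2 x y}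

/-!
Write `‖f‖²_S` for the empirical mean of `f²` over `S`. For a basis of `ℝ[x]_{≤d}` that is
orthonormal for `μ_X`, Cauchy–Schwarz gives the variational form
`Λ_X(z) = max_f f(z)² / ‖f‖²_X`, the maximum being attained at `f = ∑ b_i(z) b_i`; likewise for `Y`.
Testing the maximiser of each side in the inequality of the other shows that
`|‖f‖²_Y - ‖f‖²_X| ≤ K ‖f‖²_X` for all `f` implies `|Λ_X - Λ_Y| ≤ K Λ_Y`.

To get such a `K`, write `‖f‖²_Y - ‖f‖²_X = ∑ γ(x,y) (f(y)² - f(x)²)` for a coupling `γ`.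
On the box `f² ≤ ‖Λ_X‖_∞ ‖f‖²_X`, and Markov's inequality `|p'| ≤ 2 d² sup |p|` along coordinate
lines makes `f²` Lipschitz with constant `4 d² √n ‖Λ_X‖_∞ ‖f‖²_X` for the Euclidean distance.
So `K = 4 d² √n ‖Λ_X‖_∞ · cost(γ)`; take the infimum over `γ` and use `√n ≤ binom(n+d, d)`.
-/

namespace Polynomial

theorem eval_derivative_one_le {P : ℝ[X]} {m : ℕ} {M : ℝ} (hdeg : P.natDegree ≤ m)
    (hP : ∀ x ∈ Set.Icc (-1 : ℝ) 1, |P.eval x| ≤ M) : (derivative P).eval 1 ≤ m ^ 2 * M := by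
  rcases ((abs_nonneg _).trans (hP 0 (by norm_num))).lt_or_eq with hM | hM
  · have hdeg' : (M⁻¹ • P).degree ≤ m :=
      (degree_smul_le _ _).trans (degree_le_of_natDegree_le hdeg)
    have hbound : ∀ x ∈ Set.Icc (-1 : ℝ) 1, |(M⁻¹ • P).eval x| ≤ 1 := fun x hx => by
      rw [eval_smul, smul_eq_mul, abs_mul, abs_inv, abs_of_pos hM, inv_mul_le_one₀ hM]
      exact hP x hx
    have := Chebyshev.eval_iterate_derivative_le_of_forall_abs_le_one (k := 1) le_rfl hdeg' hbound
    simp only [Function.iterate_one, derivative_smul, eval_smul, smul_eq_mul,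
      Chebyshev.derivative_T_eval_one, Int.cast_natCast] at this
    rwa [inv_mul_le_iff₀ hM, mul_comm] at this
  · have hzero : P = 0 := eq_zero_of_infinite_isRoot P <|
      (Set.Icc_infinite (by norm_num : (-1 : ℝ) < 1)).mono fun x hx =>
        abs_nonpos_iff.mp (hM ▸ hP x hx)
    simp [hzero, ← hM]

theorem abs_eval_derivative_one_le {P : ℝ[X]} {m : ℕ} {M : ℝ} (hdeg : P.natDegree ≤ m)
    (hP : ∀ x ∈ Set.Icc (-1 : ℝ) 1, |P.eval x| ≤ M) : |(derivative P).eval 1| ≤ m ^ 2 * M := by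
  refine abs_le.mpr ⟨?_, eval_derivative_one_le hdeg hP⟩
  have := eval_derivative_one_le (P := -P) (m := m) (by rwa [natDegree_neg])
    (fun x hx => by rw [eval_neg, abs_neg]; exact hP x hx)
  rw [derivative_neg, eval_neg] at this
  linarith

/-- Markov's inequality up to a factor `2`: the endpoint bound applied to `P` restricted to the
longer of `[-1, t]` and `[t, 1]`. -/
theorem abs_eval_derivative_le {P : ℝ[X]} {m : ℕ} {M : ℝ} (hdeg : P.natDegree ≤ m)
    (hP : ∀ x ∈ Set.Icc (-1 : ℝ) 1, |P.eval x| ≤ M) {t : ℝ} (ht : t ∈ Set.Icc (-1 : ℝ) 1) :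
    |(derivative P).eval t| ≤ 2 * m ^ 2 * M := by
  obtain ⟨c, hc, hmaps⟩ : ∃ c : ℝ, 1 ≤ 2 * |c| ∧
      ∀ s ∈ Set.Icc (-1 : ℝ) 1, c * s + (t - c) ∈ Set.Icc (-1 : ℝ) 1 := by
    obtain ⟨ht₁, ht₂⟩ := ht
    rcases le_total 0 t with h | h
    · refine ⟨(t + 1) / 2, by rw [abs_of_pos (by linarith)]; linarith,
        fun s ⟨hs₁, hs₂⟩ => ⟨?_, ?_⟩⟩ <;> nlinarith
    · refine ⟨(t - 1) / 2, by rw [abs_of_neg (by linarith)]; linarith,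
        fun s ⟨hs₁, hs₂⟩ => ⟨?_, ?_⟩⟩ <;> nlinarith
  set Q := P.comp (C c * X + C (t - c))
  have hQ := abs_eval_derivative_one_le (P := Q) (m := m)
    (natDegree_comp_le.trans (by nlinarith [natDegree_linear_le (a := c) (b := t - c)]))
    (fun s hs => by simpa [Q] using hP _ (hmaps s hs))
  have hQ' : (derivative Q).eval 1 = c * (derivative P).eval t := by simp [Q, derivative_comp]
  rw [hQ', abs_mul] at hQ
  nlinarith [abs_nonneg ((derivative P).eval t)]

theorem abs_eval_sub_le {P : ℝ[X]} {m : ℕ} {M : ℝ} (hdeg : P.natDegree ≤ m)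
    (hP : ∀ x ∈ Set.Icc (-1 : ℝ) 1, |P.eval x| ≤ M) {s t : ℝ} (hs : s ∈ Set.Icc (-1 : ℝ) 1)
    (ht : t ∈ Set.Icc (-1 : ℝ) 1) : |P.eval t - P.eval s| ≤ 2 * m ^ 2 * M * |t - s| :=
  (convex_Icc (-1 : ℝ) 1).norm_image_sub_le_of_norm_deriv_le
    (fun x _ => P.differentiableAt) (fun x hx => by
      rw [Polynomial.deriv, Real.norm_eq_abs]; exact abs_eval_derivative_le hdeg hP hx) hs ht

end Polynomial

namespace MvPolynomial

theorem natDegree_aeval_le_totalDegree {σ R : Type*} [CommSemiring R] {g : σ → Polynomial R}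
    (hg : ∀ i, (g i).natDegree ≤ 1) (P : MvPolynomial σ R) :
    (aeval g P).natDegree ≤ P.totalDegree := by
  rw [aeval_def, eval₂_eq]
  refine Polynomial.natDegree_sum_le_of_forall_le _ _ fun s hs => ?_
  calc _ ≤ (∏ i ∈ s.support, g i ^ s i).natDegree := Polynomial.natDegree_C_mul_le _ _
    _ ≤ ∑ i ∈ s.support, (g i ^ s i).natDegree := Polynomial.natDegree_prod_le _ _
    _ ≤ ∑ i ∈ s.support, s i := sum_le_sum fun i _ =>
      (Polynomial.natDegree_pow_le_of_le _ (hg i)).trans (mul_one _).le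
    _ ≤ P.totalDegree := le_totalDegree hs

theorem eval_aeval_update_C {σ R : Type*} [CommSemiring R] [DecidableEq σ] (P : MvPolynomial σ R)
    (a : σ → R) (k : σ) (t : R) :
    (aeval (Function.update (fun i => Polynomial.C (a i)) k Polynomial.X) P).eval t =
      eval (Function.update a k t) P := by
  rw [aeval_def, polynomial_eval_eval₂]
  congr 1
  · ext; simp
  · ext i; by_cases h : i = k <;> simp [h]

end MvPolynomial

theorem abs_sub_le_mul_sum_abs_of_update {ι : Type*} [Fintype ι] [DecidableEq ι] {S : Set ℝ}
    {f : (ι → ℝ) → ℝ} {L : ℝ}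
    (hf : ∀ a : ι → ℝ, (∀ i, a i ∈ S) → ∀ k, ∀ t ∈ S,
      |f (Function.update a k t) - f a| ≤ L * |t - a k|)
    {x y : ι → ℝ} (hx : ∀ i, x i ∈ S) (hy : ∀ i, y i ∈ S) :
    |f y - f x| ≤ L * ∑ k, |y k - x k| := by
  suffices ∀ s : Finset ι, |f (s.piecewise y x) - f x| ≤ L * ∑ k ∈ s, |y k - x k| by
    simpa using this univ
  intro s
  induction s using Finset.induction_on with
  | empty => simp
  | insert k s hk ih =>
    have hmem : ∀ i, s.piecewise y x i ∈ S := fun i => by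
      by_cases h : i ∈ s <;> simp [h, hx i, hy i]
    have hstep := hf _ hmem k (y k) (hy k)
    rw [Finset.piecewise_eq_of_notMem _ _ _ hk] at hstep
    rw [Finset.piecewise_insert, sum_insert hk, mul_add]
    exact (abs_sub_le _ _ _).trans (add_le_add hstep ih)

theorem sum_abs_sub_le_sqrt_mul_dist2 {n : ℕ} (x y : Fin n → ℝ) :
    ∑ k, |y k - x k| ≤ √n * dist2 x y := by
  rw [dist2, ← Real.sqrt_mul (Nat.cast_nonneg n)]
  refine (Real.le_sqrt (sum_nonneg fun _ _ => abs_nonneg _) (by positivity)).mpr ?_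
  have := sq_sum_le_card_mul_sum_sq (s := univ) (f := fun k => |y k - x k|)
  simpa [sq_abs, sub_sq_comm] using this

namespace MvPolynomial

variable {n d : ℕ} {P : MvPolynomial (Fin n) ℝ} {B : ℝ}

theorem abs_eval_update_sub_le (hP : P.totalDegree ≤ d) (hB : ∀ a ∈ Box n, |eval a P| ≤ B)
    {a : Fin n → ℝ} (ha : a ∈ Box n) (k : Fin n) {t : ℝ} (ht : |t| ≤ 1) :
    |eval (Function.update a k t) P - eval a P| ≤ 2 * d ^ 2 * B * |t - a k| := by
  set Q := aeval (Function.update (fun i => Polynomial.C (a i)) k Polynomial.X) P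
  have hQ : ∀ s, Q.eval s = eval (Function.update a k s) P := eval_aeval_update_C P a k
  have hQdeg : Q.natDegree ≤ d := (natDegree_aeval_le_totalDegree (fun i => by
    by_cases h : i = k <;> simp [h]) P).trans hP
  have hQB : ∀ s ∈ Set.Icc (-1 : ℝ) 1, |Q.eval s| ≤ B := fun s hs => by
    refine hQ s ▸ hB _ fun i => ?_
    by_cases h : i = k
    · simpa [h] using abs_le.mpr hs
    · simpa [h] using ha i
  have := Polynomial.abs_eval_sub_le hQdeg hQB (abs_le.mp (ha k)) (abs_le.mp ht)
  rwa [hQ, hQ, Function.update_eq_self] at this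

theorem abs_eval_sub_le_of_mem_box (hP : P.totalDegree ≤ d) (hB : ∀ a ∈ Box n, |eval a P| ≤ B)
    {x y : Fin n → ℝ} (hx : x ∈ Box n) (hy : y ∈ Box n) :
    |eval y P - eval x P| ≤ 2 * d ^ 2 * B * √n * dist2 x y := by
  have hB0 : 0 ≤ B := (abs_nonneg _).trans (hB 0 fun i => by simp)
  calc |eval y P - eval x P| ≤ 2 * d ^ 2 * B * ∑ k, |y k - x k| :=
        abs_sub_le_mul_sum_abs_of_update (S := {t | |t| ≤ 1}) (f := fun a => eval a P)
          (fun a ha k t ht => abs_eval_update_sub_le hP hB ha k ht) hx hy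
    _ ≤ 2 * d ^ 2 * B * (√n * dist2 x y) := by gcongr; exact sum_abs_sub_le_sqrt_mul_dist2 x y
    _ = 2 * d ^ 2 * B * √n * dist2 x y := by ring

theorem abs_sq_eval_sub_le_of_mem_box (hP : P.totalDegree ≤ d)
    (hB : ∀ a ∈ Box n, |eval a P| ≤ B) {x y : Fin n → ℝ} (hx : x ∈ Box n) (hy : y ∈ Box n) :
    |eval y P ^ 2 - eval x P ^ 2| ≤ 4 * d ^ 2 * √n * B ^ 2 * dist2 x y := by
  have hsum : |eval y P + eval x P| ≤ 2 * B := by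
    linarith [abs_add_le (eval y P) (eval x P), hB y hy, hB x hx]
  have hdist : 0 ≤ 2 * d ^ 2 * B * √n * dist2 x y :=
    (abs_nonneg _).trans (abs_eval_sub_le_of_mem_box hP hB hx hy)
  calc |eval y P ^ 2 - eval x P ^ 2| = |eval y P - eval x P| * |eval y P + eval x P| := by
        rw [← abs_mul]; ring_nf
    _ ≤ (2 * d ^ 2 * B * √n * dist2 x y) * (2 * B) :=
        mul_le_mul (abs_eval_sub_le_of_mem_box hP hB hx hy) hsum (abs_nonneg _) hdist
    _ = 4 * d ^ 2 * √n * B ^ 2 * dist2 x y := by ring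

end MvPolynomial

/-- `Λ = max_f (ev f)² / N f`, attained at some `f` with `ev f = N f = Λ`: the variational form of
the Christoffel function of the quadratic form `N` at the point evaluated by `ev`. -/
structure IsChristoffelValue {V : Type*} (ev N : V → ℝ) (Λ : ℝ) : Prop where
  nonneg : 0 ≤ Λ
  sq_le : ∀ f, ev f ^ 2 ≤ Λ * N f
  exists_eq : ∃ f, ev f = Λ ∧ N f = Λ

theorem IsChristoffelValue.abs_sub_le {V : Type*} {ev NX NY : V → ℝ} {ΛX ΛY K : ℝ}
    (hX : IsChristoffelValue ev NX ΛX) (hY : IsChristoffelValue ev NY ΛY)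
    (hN : ∀ f, |NY f - NX f| ≤ K * NX f) : |ΛX - ΛY| ≤ K * ΛY := by
  obtain ⟨f, hfev, hfN⟩ := hX.exists_eq
  obtain ⟨g, hgev, hgN⟩ := hY.exists_eq
  have hYf : ΛX ^ 2 ≤ ΛY * NY f := hfev ▸ hY.sq_le f
  have hXg : ΛY ^ 2 ≤ ΛX * NX g := hgev ▸ hX.sq_le g
  have hf : NY f ≤ (1 + K) * ΛX := by have := (abs_le.mp (hN f)).2; rw [hfN] at this; linarith
  have hg : (1 - K) * NX g ≤ ΛY := by have := (abs_le.mp (hN g)).1; rw [hgN] at this; linarith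
  have hΛX := hX.nonneg
  have hΛY := hY.nonneg
  refine abs_le.mpr ⟨?_, ?_⟩
  · rcases le_or_gt 1 K with hK | hK
    · nlinarith
    rcases hΛY.eq_or_lt with h0 | hpos
    · simpa [← h0] using hΛX
    · nlinarith [mul_le_mul_of_nonneg_left hg hΛX]
  · rcases hΛX.eq_or_lt with h0 | hpos
    · have hΛY0 : ΛY = 0 := by rw [← h0, zero_mul] at hXg; nlinarith
      simp [← h0, hΛY0]
    · nlinarith [mul_le_mul_of_nonneg_left hf hΛY]

section Empirical

variable {α ι : Type*}

theorem Finset.Nonempty.of_orthonormal [Nonempty ι] [DecidableEq ι] {S : Finset α}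
    {g : ι → α → ℝ}
    (horth : ∀ i j, (S.card : ℝ)⁻¹ * ∑ x ∈ S, g i x * g j x = if i = j then 1 else 0) :
    S.Nonempty := by
  obtain ⟨i⟩ := ‹Nonempty ι›
  by_contra hS
  simpa [not_nonempty_iff_eq_empty.mp hS] using horth i i

variable [Fintype ι] [DecidableEq ι]

noncomputable def empiricalNormSq (S : Finset α) (h : α → ℝ) : ℝ :=
  (S.card : ℝ)⁻¹ * ∑ x ∈ S, h x ^ 2

theorem empiricalNormSq_nonneg (S : Finset α) (h : α → ℝ) : 0 ≤ empiricalNormSq S h := by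
  unfold empiricalNormSq; positivity

theorem empiricalNormSq_sum_mul {S : Finset α} {g : ι → α → ℝ}
    (horth : ∀ i j, (S.card : ℝ)⁻¹ * ∑ x ∈ S, g i x * g j x = if i = j then 1 else 0)
    (c : ι → ℝ) : empiricalNormSq S (fun x => ∑ i, c i * g i x) = ∑ i, c i ^ 2 := by
  calc empiricalNormSq S (fun x => ∑ i, c i * g i x)
      = ∑ i, ∑ j, c i * c j * ((S.card : ℝ)⁻¹ * ∑ x ∈ S, g i x * g j x) := by
        simp only [empiricalNormSq, sq, sum_mul_sum]
        simp only [mul_sum]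
        rw [sum_comm]
        refine sum_congr rfl fun i _ => ?_
        rw [sum_comm]
        exact sum_congr rfl fun j _ => sum_congr rfl fun x _ => by ring
    _ = ∑ i, c i ^ 2 := by simp [horth, sq]

theorem isChristoffelValue_of_orthonormal {V : Type*} [AddCommGroup V] [Module ℝ V]
    (b : Module.Basis ι ℝ V) (e : V →ₗ[ℝ] α → ℝ) {S : Finset α}
    (horth : ∀ i j, (S.card : ℝ)⁻¹ * ∑ x ∈ S, e (b i) x * e (b j) x = if i = j then 1 else 0)
    (z : α) :
    IsChristoffelValue (fun f => e f z) (fun f => empiricalNormSq S (e f))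
      (∑ i, e (b i) z ^ 2) := by
  have he : ∀ f, e f = fun x => ∑ i, b.repr f i * e (b i) x := fun f => by
    ext x
    conv_lhs => rw [← b.sum_repr f]
    simp only [map_sum, map_smul, Finset.sum_apply, Pi.smul_apply, smul_eq_mul]
  have hN : ∀ f, empiricalNormSq S (e f) = ∑ i, b.repr f i ^ 2 := fun f => by
    rw [he f]; exact empiricalNormSq_sum_mul horth _
  refine ⟨sum_nonneg fun _ _ => sq_nonneg _, fun f => ?_, ⟨∑ i, e (b i) z • b i, ?_, ?_⟩⟩
  · rw [hN f, he f, mul_comm]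
    exact sum_mul_sq_le_sq_mul_sq _ _ _
  · show e _ z = _
    rw [he]
    simp only [b.repr_sum_self, sq]
  · rw [hN, b.repr_sum_self]

end Empirical

section Transport

variable {n : ℕ}

noncomputable def transportCost (X Y : Finset (Fin n → ℝ))
    (γ : (Fin n → ℝ) → (Fin n → ℝ) → ℝ) : ℝ :=
  ∑ x ∈ X, ∑ y ∈ Y, γ x y * dist2 x y

theorem IsCoupling.abs_sum_sub_le {X Y : Finset (Fin n → ℝ)} {μX μY : (Fin n → ℝ) → ℝ}
    {γ : (Fin n → ℝ) → (Fin n → ℝ) → ℝ} (hγ : IsCoupling X Y μX μY γ)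
    {h : (Fin n → ℝ) → ℝ} {L : ℝ} (hh : ∀ x ∈ X, ∀ y ∈ Y, |h y - h x| ≤ L * dist2 x y) :
    |∑ y ∈ Y, μY y * h y - ∑ x ∈ X, μX x * h x| ≤ L * transportCost X Y γ := by
  obtain ⟨hγ0, hγX, hγY⟩ := hγ
  have hYsum : ∑ y ∈ Y, μY y * h y = ∑ x ∈ X, ∑ y ∈ Y, γ x y * h y := by
    rw [sum_comm]
    exact sum_congr rfl fun y hy => by rw [← hγY y hy, sum_mul]
  have hXsum : ∑ x ∈ X, μX x * h x = ∑ x ∈ X, ∑ y ∈ Y, γ x y * h x :=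
    sum_congr rfl fun x hx => by rw [← hγX x hx, sum_mul]
  calc |∑ y ∈ Y, μY y * h y - ∑ x ∈ X, μX x * h x|
      = |∑ x ∈ X, ∑ y ∈ Y, γ x y * (h y - h x)| := by
        simp only [hYsum, hXsum, mul_sub, sum_sub_distrib]
    _ ≤ ∑ x ∈ X, ∑ y ∈ Y, γ x y * (L * dist2 x y) :=
        (abs_sum_le_sum_abs _ _).trans <| sum_le_sum fun x hx =>
          (abs_sum_le_sum_abs _ _).trans <| sum_le_sum fun y hy => by
            rw [abs_mul, abs_of_nonneg (hγ0 x y)]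
            exact mul_le_mul_of_nonneg_left (hh x hx y hy) (hγ0 x y)
    _ = L * transportCost X Y γ := by
        simp only [transportCost, mul_sum]
        exact sum_congr rfl fun x _ => sum_congr rfl fun y _ => by ring

theorem IsCoupling.transportCost_nonneg {X Y : Finset (Fin n → ℝ)} {μX μY : (Fin n → ℝ) → ℝ}
    {γ : (Fin n → ℝ) → (Fin n → ℝ) → ℝ} (hγ : IsCoupling X Y μX μY γ) :
    0 ≤ transportCost X Y γ :=
  sum_nonneg fun x _ => sum_nonneg fun y _ => mul_nonneg (hγ.1 x y) (Real.sqrt_nonneg _)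

theorem isCoupling_empirical_product {X Y : Finset (Fin n → ℝ)} (hX : X.Nonempty)
    (hY : Y.Nonempty) :
    IsCoupling X Y (fun _ => (X.card : ℝ)⁻¹) (fun _ => (Y.card : ℝ)⁻¹)
      (fun _ _ => (X.card : ℝ)⁻¹ * (Y.card : ℝ)⁻¹) := by
  have hX' : (X.card : ℝ) ≠ 0 := by exact_mod_cast hX.card_ne_zero
  have hY' : (Y.card : ℝ) ≠ 0 := by exact_mod_cast hY.card_ne_zero
  refine ⟨fun _ _ => by positivity, fun _ _ => ?_, fun _ _ => ?_⟩ <;>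
    simp only [sum_const, nsmul_eq_mul] <;> field_simp

theorem le_mul_wassersteinDist {X Y : Finset (Fin n → ℝ)} {μX μY : (Fin n → ℝ) → ℝ} {a c : ℝ}
    (hc : 0 ≤ c) (hne : ∃ γ, IsCoupling X Y μX μY γ)
    (h : ∀ γ, IsCoupling X Y μX μY γ → a ≤ c * transportCost X Y γ) :
    a ≤ c * wassersteinDist X Y μX μY := by
  obtain ⟨γ₀, hγ₀⟩ := hne
  rcases hc.eq_or_lt with rfl | hc
  · simpa using h γ₀ hγ₀
  rw [← div_le_iff₀' hc]
  refine le_csInf ⟨_, γ₀, hγ₀, rfl⟩ ?_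
  rintro _ ⟨γ, hγ, rfl⟩
  rw [div_le_iff₀' hc]
  exact h γ hγ

end Transport

theorem box_eq_closedBall (n : ℕ) : Box n = Metric.closedBall 0 1 := by
  ext x
  simp [Box, pi_norm_le_iff_of_nonneg]

theorem le_supNormBox {n : ℕ} {f : (Fin n → ℝ) → ℝ} (hf : Continuous f) {a : Fin n → ℝ}
    (ha : a ∈ Box n) : f a ≤ supNormBox f := by
  rw [box_eq_closedBall] at ha
  refine le_csSup ?_ ⟨a, ?_, rfl⟩
  · rw [box_eq_closedBall]
    exact ((isCompact_closedBall 0 1).image hf).bddAbove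
  · rwa [box_eq_closedBall]

theorem sq_mul_sqrt_le_sq_mul_choose (n d : ℕ) :
    (d : ℝ) ^ 2 * √n ≤ (d : ℝ) ^ 2 * (n + d).choose d := by
  rcases Nat.eq_zero_or_pos d with rfl | hd
  · simp
  have hchoose : n + 1 ≤ (n + d).choose d := by
    rw [← Nat.choose_symm_add]
    exact (Nat.choose_succ_self_right n).ge.trans (Nat.choose_le_choose n (by omega))
  have hsqrt : √n ≤ n + 1 := Real.sqrt_le_iff.mpr ⟨by positivity, by nlinarith⟩
  gcongr
  exact hsqrt.trans (by exact_mod_cast hchoose)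

theorem abs_empiricalNormSq_eval_sub_le {n d : ℕ} {X Y : Finset (Fin n → ℝ)}
    (hX : ↑X ⊆ Box n) (hY : ↑Y ⊆ Box n) {γ : (Fin n → ℝ) → (Fin n → ℝ) → ℝ}
    (hγ : IsCoupling X Y (fun _ => (X.card : ℝ)⁻¹) (fun _ => (Y.card : ℝ)⁻¹) γ)
    {P : MvPolynomial (Fin n) ℝ} (hP : P.totalDegree ≤ d) {C : ℝ}
    (hC : ∀ a ∈ Box n, eval a P ^ 2 ≤ C) :
    |empiricalNormSq Y (fun y => eval y P) - empiricalNormSq X (fun x => eval x P)| ≤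
      4 * d ^ 2 * √n * C * transportCost X Y γ := by
  have hC0 : 0 ≤ C := (sq_nonneg _).trans (hC 0 fun i => by simp)
  have hB : ∀ a ∈ Box n, |eval a P| ≤ √C := fun a ha => Real.abs_le_sqrt (hC a ha)
  simp only [empiricalNormSq, mul_sum]
  simpa [Real.sq_sqrt hC0] using hγ.abs_sum_sub_le fun x hx y hy =>
    abs_sq_eval_sub_le_of_mem_box hP hB (hX hx) (hY hy)

theorem abs_christoffel_sub_le_of_isCoupling {n d : ℕ} {ι : Type*} [Fintype ι] [DecidableEq ι]
    {X Y : Finset (Fin n → ℝ)} (hX : ↑X ⊆ Box n) (hY : ↑Y ⊆ Box n)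
    {bX bY : Module.Basis ι ℝ (restrictTotalDegree (Fin n) ℝ d)}
    (horthX : ∀ i j, (X.card : ℝ)⁻¹ * ∑ x ∈ X,
      eval x (bX i : MvPolynomial (Fin n) ℝ) * eval x (bX j : MvPolynomial (Fin n) ℝ) =
        if i = j then 1 else 0)
    (horthY : ∀ i j, (Y.card : ℝ)⁻¹ * ∑ y ∈ Y,
      eval y (bY i : MvPolynomial (Fin n) ℝ) * eval y (bY j : MvPolynomial (Fin n) ℝ) =
        if i = j then 1 else 0)
    {γ : (Fin n → ℝ) → (Fin n → ℝ) → ℝ}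
    (hγ : IsCoupling X Y (fun _ => (X.card : ℝ)⁻¹) (fun _ => (Y.card : ℝ)⁻¹) γ) {M : ℝ}
    (hM : ∀ a ∈ Box n, ∑ i, eval a (bX i : MvPolynomial (Fin n) ℝ) ^ 2 ≤ M) (z : Fin n → ℝ) :
    |∑ i, eval z (bX i : MvPolynomial (Fin n) ℝ) ^ 2 -
        ∑ i, eval z (bY i : MvPolynomial (Fin n) ℝ) ^ 2| ≤
      4 * d ^ 2 * √n * M * transportCost X Y γ *
        ∑ i, eval z (bY i : MvPolynomial (Fin n) ℝ) ^ 2 := by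
  let e : restrictTotalDegree (Fin n) ℝ d →ₗ[ℝ] (Fin n → ℝ) → ℝ :=
    LinearMap.pi fun x => (aeval x).toLinearMap ∘ₗ Submodule.subtype _
  have hΛX := isChristoffelValue_of_orthonormal bX e horthX
  refine (hΛX z).abs_sub_le (isChristoffelValue_of_orthonormal bY e horthY z) fun f => ?_
  calc _ ≤ 4 * d ^ 2 * √n * (M * empiricalNormSq X (e f)) * transportCost X Y γ :=
        abs_empiricalNormSq_eval_sub_le hX hY hγ ((mem_restrictTotalDegree _ _ _).mp f.2)
          fun a ha => ((hΛX a).sq_le f).trans <|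
            mul_le_mul_of_nonneg_right (hM a ha) (empiricalNormSq_nonneg _ _)
    _ = _ := by ring

/-- Wasserstein stability of the Christoffel polynomial. For finite
nondegenerate sample sets X, Y ⊆ [−1,1]ⁿ with empirical measures μ_X, μ_Y and degree-d
Christoffel polynomials Λ_X, Λ_Y (given via orthonormal bases for the empirical inner
products), with C = 4·binom(n+d,d)·d², for all x:
|Λ_X(x) − Λ_Y(x)| ≤ C·‖Λ_X‖_∞·d_W(μ_X,μ_Y)·Λ_Y(x). -/
theorem christoffel_wasserstein_stability {n d : ℕ} {ι : Type} [Fintype ι] [DecidableEq ι]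
    (X Y : Finset (Fin n → ℝ)) (hX : ↑X ⊆ Box n) (hY : ↑Y ⊆ Box n)
    (bX bY : Module.Basis ι ℝ (restrictTotalDegree (Fin n) ℝ d))
    (horthX : ∀ i j, (X.card : ℝ)⁻¹ *
        ∑ x ∈ X, eval x ((bX i : restrictTotalDegree (Fin n) ℝ d) : MvPolynomial (Fin n) ℝ) *
          eval x ((bX j : restrictTotalDegree (Fin n) ℝ d) : MvPolynomial (Fin n) ℝ) =
        if i = j then 1 else 0)
    (horthY : ∀ i j, (Y.card : ℝ)⁻¹ *
        ∑ y ∈ Y, eval y ((bY i : restrictTotalDegree (Fin n) ℝ d) : MvPolynomial (Fin n) ℝ) *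
          eval y ((bY j : restrictTotalDegree (Fin n) ℝ d) : MvPolynomial (Fin n) ℝ) =
        if i = j then 1 else 0) :
    ∀ z : Fin n → ℝ,
      |(∑ i, (eval z ((bX i : restrictTotalDegree (Fin n) ℝ d) : MvPolynomial (Fin n) ℝ)) ^ 2) -
          ∑ i, (eval z ((bY i : restrictTotalDegree (Fin n) ℝ d) : MvPolynomial (Fin n) ℝ)) ^ 2| ≤
        (4 * (n + d).choose d * d ^ 2 : ℝ) *
          supNormBox (fun x => ∑ i, (eval x ((bX i : restrictTotalDegree (Fin n) ℝ d) : MvPolynomial (Fin n) ℝ)) ^ 2) *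
          wassersteinDist X Y (fun _ => (X.card : ℝ)⁻¹) (fun _ => (Y.card : ℝ)⁻¹) *
          (∑ i, (eval z ((bY i : restrictTotalDegree (Fin n) ℝ d) : MvPolynomial (Fin n) ℝ)) ^ 2) := by
  intro z
  rcases isEmpty_or_nonempty ι with hι | hι
  · simp
  set M := supNormBox fun x => ∑ i, (eval x (bX i : MvPolynomial (Fin n) ℝ)) ^ 2
  have hM : ∀ a ∈ Box n, ∑ i, (eval a (bX i : MvPolynomial (Fin n) ℝ)) ^ 2 ≤ M :=
    fun a ha => le_supNormBox (continuous_finsetSum _ fun i _ => (continuous_eval _).pow 2) ha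
  have hM0 : 0 ≤ M := (sum_nonneg fun _ _ => sq_nonneg _).trans (hM 0 fun i => by simp)
  have hΛY0 : 0 ≤ ∑ i, (eval z (bY i : MvPolynomial (Fin n) ℝ)) ^ 2 :=
    sum_nonneg fun _ _ => sq_nonneg _
  rw [mul_right_comm _ (wassersteinDist _ _ _ _)]
  refine le_mul_wassersteinDist (by positivity) ⟨_, isCoupling_empirical_product
    (.of_orthonormal horthX) (.of_orthonormal horthY)⟩ fun γ hγ => ?_
  calc _ ≤ 4 * d ^ 2 * √n * M * transportCost X Y γ *
        ∑ i, (eval z (bY i : MvPolynomial (Fin n) ℝ)) ^ 2 :=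
        abs_christoffel_sub_le_of_isCoupling hX hY horthX horthY hγ hM z
    _ ≤ 4 * (n + d).choose d * d ^ 2 * M * transportCost X Y γ *
        ∑ i, (eval z (bY i : MvPolynomial (Fin n) ℝ)) ^ 2 := by
      have := sq_mul_sqrt_le_sq_mul_choose n d
      have := hγ.transportCost_nonneg
      gcongr ?_ * _ * _ * _
      linarith
    _ = _ := by ring
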